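/- arXiv:1401.0212 — 5 statements merged into one kernel-verified Lean document; each statement's English description precedes it below -/
import Mathlib

section
/- Let U ⊆ ℝ^d be nonempty, convex, and compact, and let P be a Borel probability measure on ℝ^d. Suppose that for every v ∈ ℝ^d, the support function δ*(v|U) = sup_{u∈U} vᵀu satisfies δ*(v|U) ≥ VaR_ε^P(v), where VaR_ε^P(v) = inf{t : P(ũᵀv ≤ t) ≥ 1−ε}. Then for every x and every function f(u,x) that is concave in u, if f(u,x) ≤ 0 for all u ∈ U then P(f(ũ,x) ≤ 0) ≥ 1−ε. -/
/-! The set where `f > 0` is open and convex and misses `U`, so a hyperplane separates it from `U`: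
there are `v` and `c` with `uᵀv ≤ c` on `U` and `f ≤ 0` on the half-space `{uᵀv ≤ c}`. Hence
`VaR_ε(v) ≤ δ*(v|U) ≤ c`, and since the distribution function of `uᵀv` is right-continuous the
infimum defining `VaR_ε(v)` is attained, so the half-space, and with it `{f ≤ 0}`, has
probability at least `1 - ε`. -/

open MeasureTheory

/-- Value at Risk at level `ε` of the linear functional `u ↦ uᵀv` under `P`. -/
noncomputable def VaR {d : ℕ} (P : Measure (Fin d → ℝ)) (ε : ℝ) (v : Fin d → ℝ) : ℝ :=
  sInf {t : ℝ | ENNReal.ofReal (1 - ε) ≤ P {u | ∑ i, u i * v i ≤ t}}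

open Set Filter Topology

theorem biInter_gt_Iic {α : Type*} [LinearOrder α] [DenselyOrdered α] (c : α) :
    ⋂ r > c, Iic r = Iic c := by
  ext x
  simpa using ⟨le_of_forall_gt_imp_ge_of_dense, fun hx _ h => hx.trans h.le⟩

theorem tendsto_measure_Iic_nhdsGT (ν : Measure ℝ) [IsFiniteMeasure ν] (c : ℝ) :
    Tendsto (fun t => ν (Iic t)) (𝓝[>] c) (𝓝 (ν (Iic c))) := by
  have := tendsto_measure_biInter_gt (μ := ν) (s := Iic) (a := c)
    (fun _ _ => measurableSet_Iic.nullMeasurableSet) (fun _ _ _ hij => Iic_subset_Iic.2 hij)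
    ⟨c + 1, by linarith, measure_ne_top _ _⟩
  rwa [biInter_gt_Iic] at this

theorem le_measure_Iic_of_sInf_le {ν : Measure ℝ} [IsFiniteMeasure ν] {q : ENNReal}
    (hq : q < ν univ) {c : ℝ} (hc : sInf {t | q ≤ ν (Iic t)} ≤ c) : q ≤ ν (Iic c) := by
  set T := {t | q ≤ ν (Iic t)}
  have hT : T.Nonempty :=
    let ⟨t, ht⟩ := ((tendsto_measure_Iic_atTop ν).eventually_const_lt hq).exists
    ⟨t, ht.le⟩
  have hgt : ∀ t > c, q ≤ ν (Iic t) := fun t ht => by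
    obtain ⟨s, hs, hst⟩ := exists_lt_of_csInf_lt hT (hc.trans_lt ht)
    exact hs.trans (measure_mono (Iic_subset_Iic.2 hst.le))
  exact ge_of_tendsto (tendsto_measure_Iic_nhdsGT ν c) (eventually_nhdsWithin_of_forall hgt)

theorem le_measure_of_VaR_le {d : ℕ} (P : Measure (Fin d → ℝ)) [IsProbabilityMeasure P]
    {ε : ℝ} (hε : 0 < ε) {v : Fin d → ℝ} {c : ℝ} (hc : VaR P ε v ≤ c) :
    ENNReal.ofReal (1 - ε) ≤ P {u | ∑ i, u i * v i ≤ c} := by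
  have hg : Measurable fun u : Fin d → ℝ => ∑ i, u i * v i := by fun_prop
  have hmap : ∀ t, P {u | ∑ i, u i * v i ≤ t} = P.map (fun u => ∑ i, u i * v i) (Iic t) :=
    fun t => (Measure.map_apply hg measurableSet_Iic).symm
  have : IsProbabilityMeasure (P.map fun u => ∑ i, u i * v i) :=
    Measure.isProbabilityMeasure_map hg.aemeasurable
  rw [hmap]
  refine le_measure_Iic_of_sInf_le ?_ ?_
  · rw [measure_univ, ← ENNReal.ofReal_one]
    exact (ENNReal.ofReal_lt_ofReal_iff one_pos).2 (by linarith)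
  · simpa only [VaR, hmap] using hc

theorem ConcaveOn.exists_halfspace_between {E : Type*} [TopologicalSpace E] [AddCommGroup E]
    [Module ℝ E] [IsTopologicalAddGroup E] [ContinuousSMul ℝ E] {f : E → ℝ}
    (hf : ConcaveOn ℝ univ f) (hfc : Continuous f) {U : Set E} (hU : Convex ℝ U)
    (hfU : ∀ u ∈ U, f u ≤ 0) :
    ∃ (φ : E →L[ℝ] ℝ) (c : ℝ), (∀ u ∈ U, φ u ≤ c) ∧ ∀ u, φ u ≤ c → f u ≤ 0 := by
  have hconv : Convex ℝ {u | 0 < f u} := by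
    simpa only [mem_univ, true_and] using hf.convex_gt 0
  have hdisj : Disjoint {u | 0 < f u} U :=
    disjoint_left.2 fun u hpos hu => (hfU u hu).not_gt hpos
  obtain ⟨φ, c, hpos, hU⟩ :=
    geometric_hahn_banach_open hconv (isOpen_lt continuous_const hfc) hU hdisj
  exact ⟨-φ, -c, fun u hu => by simpa using hU u hu,
    fun u hu => not_lt.1 fun h => (hpos u h).not_ge (by simpa using hu)⟩

theorem ContinuousLinearMap.apply_eq_sum_mul_single {ι : Type*} [Fintype ι] [DecidableEq ι]
    (φ : (ι → ℝ) →L[ℝ] ℝ) (u : ι → ℝ) : φ u = ∑ i, u i * φ (Pi.single i 1) := by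
  nth_rw 1 [pi_eq_sum_univ' u]
  simp only [map_sum, map_smul, smul_eq_mul]

theorem stmt0_general {d : ℕ} (P : Measure (Fin d → ℝ)) [IsProbabilityMeasure P]
    (U : Set (Fin d → ℝ)) (hUne : U.Nonempty) (hUconv : Convex ℝ U)
    (ε : ℝ) (hε0 : 0 < ε)
    (hsupp : ∀ v : Fin d → ℝ, VaR P ε v ≤ sSup ((fun u => ∑ i, u i * v i) '' U))
    (f : (Fin d → ℝ) → ℝ) (hf : ConcaveOn ℝ Set.univ f) (hfc : Continuous f)
    (hrob : ∀ u ∈ U, f u ≤ 0) :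
    ENNReal.ofReal (1 - ε) ≤ P {u | f u ≤ 0} := by
  obtain ⟨φ, c, hφU, hφf⟩ := hf.exists_halfspace_between hfc hUconv hrob
  have hφ := φ.apply_eq_sum_mul_single
  have hsupU : sSup ((fun u => ∑ i, u i * φ (Pi.single i 1)) '' U) ≤ c :=
    csSup_le (hUne.image _) (forall_mem_image.2 fun u hu => hφ u ▸ hφU u hu)
  refine (le_measure_of_VaR_le P hε0 ((hsupp _).trans hsupU)).trans (measure_mono ?_)
  exact fun u hu => hφf u (hφ u ▸ hu)

theorem stmt0 {d : ℕ} (P : Measure (Fin d → ℝ)) [IsProbabilityMeasure P]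
    (U : Set (Fin d → ℝ)) (hUne : U.Nonempty) (hUconv : Convex ℝ U) (hUcpt : IsCompact U)
    (ε : ℝ) (hε0 : 0 < ε) (hε1 : ε < 1)
    (hsupp : ∀ v : Fin d → ℝ, VaR P ε v ≤ sSup ((fun u => ∑ i, u i * v i) '' U))
    (f : (Fin d → ℝ) → ℝ) (hf : ConcaveOn ℝ Set.univ f) (hfc : Continuous f)
    (hrob : ∀ u ∈ U, f u ≤ 0) :
    ENNReal.ofReal (1 - ε) ≤ P {u | f u ≤ 0} :=
  stmt0_general P U hUne hUconv ε hε0 hsupp f hf hfc hrob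
end

section
/- Let P be a probability distribution supported on finitely many points a_0,…,a_{n−1} ∈ ℝ^d with p_j = P(ũ = a_j), and let ε ∈ (0,1). Define U = { Σ_j q_j a_j : q ∈ Δ_n, q ≤ p/ε } where Δ_n is the probability simplex. Then for every v ∈ ℝ^d, sup_{u∈U} vᵀu = CVaR_ε^P(v) = min_t { t + (1/ε) Σ_j p_j (a_jᵀv − t)^+ }. -/
/-!
Weak duality: for a feasible `q` and any `t`, `∑ q c = t + ∑ q (c - t)` is at most
`t + (1/ε) ∑ p (c - t)⁺` because `0 ≤ q ≤ p/ε`. Equality is attained at an upper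
`ε`-quantile `t` of `c` under `p` (`P(c > t) ≤ ε < P(c ≥ t)`): put the full weight `p/ε` on
`{c > t}` and spread the remaining mass `1 - P(c > t)/ε` proportionally to `p` over `{c = t}`;
then `q (c - t) = (p/ε) (c - t)⁺` termwise.
-/

open Finset

section

variable {ι : Type*} [Fintype ι] {p q : ι → ℝ} {ε : ℝ}

/-- The Rockafellar–Uryasev function, whose infimum over `t` is `CVaR_ε` of `c` under `p`. -/
noncomputable def rockafellarUryasev (p c : ι → ℝ) (ε t : ℝ) : ℝ :=
  t + (1 / ε) * ∑ j, p j * max (c j - t) 0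

lemma sum_mul_eq_add_sum_mul_sub (hq1 : ∑ j, q j = 1) (c : ι → ℝ) (t : ℝ) :
    ∑ j, q j * c j = t + ∑ j, q j * (c j - t) := by
  simp only [mul_sub, sum_sub_distrib, ← sum_mul, hq1]
  ring

lemma sum_mul_le_rockafellarUryasev (hq0 : ∀ j, 0 ≤ q j) (hq1 : ∑ j, q j = 1)
    (hqp : ∀ j, q j ≤ p j / ε) (c : ι → ℝ) (t : ℝ) :
    ∑ j, q j * c j ≤ rockafellarUryasev p c ε t := by
  rw [sum_mul_eq_add_sum_mul_sub hq1 c t, rockafellarUryasev, mul_sum]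
  refine (add_le_add_iff_left t).mpr (sum_le_sum fun j _ => ?_)
  calc q j * (c j - t) ≤ q j * max (c j - t) 0 :=
        mul_le_mul_of_nonneg_left (le_max_left _ _) (hq0 j)
    _ ≤ p j / ε * max (c j - t) 0 := mul_le_mul_of_nonneg_right (hqp j) (le_max_right _ _)
    _ = 1 / ε * (p j * max (c j - t) 0) := by ring

lemma exists_upper_quantile (hp1 : ∑ j, p j = 1) (hε0 : 0 < ε) (hε1 : ε < 1) (c : ι → ℝ) :
    ∃ t, ∑ j with t < c j, p j ≤ ε ∧ ε < ∑ j with t ≤ c j, p j := by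
  set T := univ.filter fun j => ε < ∑ k with c j ≤ c k, p k
  obtain ⟨j₀, -, hj₀⟩ := exists_min_image univ c (nonempty_of_sum_ne_zero (hp1 ▸ one_ne_zero))
  have hT : T.Nonempty := ⟨j₀, by simpa [T, hj₀, hp1] using hε1⟩
  obtain ⟨j₁, hj₁T, hj₁⟩ := exists_max_image T c hT
  refine ⟨c j₁, ?_, (mem_filter.mp hj₁T).2⟩
  by_contra! hG
  -- The smallest value of `c` above `c j₁` would also lie in `T`, contradicting maximality.
  obtain ⟨k₁, hk₁, hk₁min⟩ := exists_min_image _ c (nonempty_of_sum_ne_zero (hε0.trans hG).ne')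
  have hk₁lt : c j₁ < c k₁ := (mem_filter.mp hk₁).2
  have hupper : (univ.filter fun k => c k₁ ≤ c k) = univ.filter fun k => c j₁ < c k := by
    ext k
    simp only [mem_filter, mem_univ, true_and]
    exact ⟨hk₁lt.trans_le, fun h => hk₁min k (by simpa using h)⟩
  have hk₁T : k₁ ∈ T := by simpa [T, hupper] using hG
  exact (hj₁ k₁ hk₁T).not_gt hk₁lt

lemma exists_weight_sum_mul_eq_rockafellarUryasev (hp : ∀ j, 0 ≤ p j) (hε0 : 0 < ε)
    {c : ι → ℝ} {t : ℝ} (hG : ∑ j with t < c j, p j ≤ ε) (hGm : ε < ∑ j with t ≤ c j, p j) :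
    ∃ q : ι → ℝ, (∀ j, 0 ≤ q j) ∧ ∑ j, q j = 1 ∧ (∀ j, q j ≤ p j / ε) ∧
      ∑ j, q j * c j = rockafellarUryasev p c ε t := by
  set G := ∑ j with t < c j, p j
  set m := ∑ j with c j = t, p j
  have hsplit : ∑ j with t ≤ c j, p j = G + m := by
    simp only [G, m, sum_filter, ← sum_add_distrib]
    refine sum_congr rfl fun j _ => ?_
    split_ifs <;> grind
  have hm : 0 < m := by linarith
  set θ := (ε - G) / m
  have hθ0 : 0 ≤ θ := div_nonneg (by linarith) hm.le
  have hθ1 : θ ≤ 1 := (div_le_one hm).mpr (by linarith)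
  set w : ι → ℝ := fun j => if t < c j then 1 else if c j = t then θ else 0
  have hw0 : ∀ j, 0 ≤ w j := fun j => by simp only [w]; split_ifs <;> linarith
  have hw1 : ∀ j, w j ≤ 1 := fun j => by simp only [w]; split_ifs <;> linarith
  have hmass : ∑ j, p j * w j = G + θ * m := by
    simp only [G, m, w, sum_filter, mul_sum, ← sum_add_distrib]
    refine sum_congr rfl fun j _ => ?_
    split_ifs <;> grind
  have hslack : ∀ j, p j / ε * w j * (c j - t) = p j / ε * max (c j - t) 0 := fun j => by
    simp only [w]
    split_ifs with h₁ h₂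
    · rw [max_eq_left (by linarith)]; ring
    · rw [h₂, sub_self, max_self]; ring
    · rw [max_eq_right (by grind)]; ring
  have hq1 : ∑ j, p j / ε * w j = 1 := by
    simp only [div_mul_eq_mul_div, ← sum_div, hmass, θ, div_mul_cancel₀ _ hm.ne']
    field_simp
    ring
  refine ⟨fun j => p j / ε * w j, fun j => mul_nonneg (div_nonneg (hp j) hε0.le) (hw0 j), hq1,
    fun j => mul_le_of_le_one_right (div_nonneg (hp j) hε0.le) (hw1 j), ?_⟩
  rw [sum_mul_eq_add_sum_mul_sub hq1, rockafellarUryasev, mul_sum]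
  congr 1
  exact sum_congr rfl fun j _ => by rw [hslack]; ring

theorem sSup_sum_mul_eq_iInf_rockafellarUryasev (hp : ∀ j, 0 ≤ p j) (hp1 : ∑ j, p j = 1)
    (hε0 : 0 < ε) (hε1 : ε < 1) (c : ι → ℝ) :
    sSup {x | ∃ q : ι → ℝ, (∀ j, 0 ≤ q j) ∧ ∑ j, q j = 1 ∧ (∀ j, q j ≤ p j / ε) ∧
        x = ∑ j, q j * c j} = ⨅ t, rockafellarUryasev p c ε t := by
  obtain ⟨t₀, hG, hGm⟩ := exists_upper_quantile hp1 hε0 hε1 c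
  obtain ⟨q, hq0, hq1, hqp, hq⟩ := exists_weight_sum_mul_eq_rockafellarUryasev hp hε0 hG hGm
  have hgreatest : IsGreatest {x | ∃ q : ι → ℝ, (∀ j, 0 ≤ q j) ∧ ∑ j, q j = 1 ∧
      (∀ j, q j ≤ p j / ε) ∧ x = ∑ j, q j * c j} (rockafellarUryasev p c ε t₀) := by
    refine ⟨⟨q, hq0, hq1, hqp, hq.symm⟩, ?_⟩
    rintro _ ⟨q', hq0', hq1', hqp', rfl⟩
    exact sum_mul_le_rockafellarUryasev hq0' hq1' hqp' c t₀
  have hleast : IsLeast (Set.range (rockafellarUryasev p c ε)) (rockafellarUryasev p c ε t₀) := by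
    refine ⟨⟨t₀, rfl⟩, ?_⟩
    rintro _ ⟨t, rfl⟩
    exact hq ▸ sum_mul_le_rockafellarUryasev hq0 hq1 hqp c t
  rw [hgreatest.csSup_eq, hleast.isGLB.ciInf_eq]

end

/-- For a distribution with finite support `a_0, …, a_{n-1}` and probabilities `p`,
the support function of the CVaR uncertainty set equals the Rockafellar–Uryasev
representation of CVaR. -/
theorem stmt4 {d n : ℕ} (p : Fin n → ℝ) (hp : ∀ j, 0 ≤ p j) (hp1 : ∑ j, p j = 1)
    (a : Fin n → Fin d → ℝ) (ε : ℝ) (hε0 : 0 < ε) (hε1 : ε < 1) (v : Fin d → ℝ) :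
    sSup {x : ℝ | ∃ q : Fin n → ℝ, (∀ j, 0 ≤ q j) ∧ (∑ j, q j = 1) ∧
        (∀ j, q j ≤ p j / ε) ∧ x = ∑ i, (∑ j, q j * a j i) * v i} =
      ⨅ t : ℝ, (t + (1 / ε) * ∑ j, p j * max (∑ i, a j i * v i - t) 0) := by
  have hswap : ∀ q : Fin n → ℝ, ∑ i, (∑ j, q j * a j i) * v i = ∑ j, q j * ∑ i, a j i * v i :=
    fun q => (Matrix.dotProduct_mulVec q a v).symm
  simp_rw [hswap]
  exact sSup_sum_mul_eq_iInf_rockafellarUryasev hp hp1 hε0 hε1 _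
end

section
/- Let m_f, m_b ∈ ℝ^d, σ_f, σ_b ∈ ℝ^d with σ_{fi}, σ_{bi} > 0, and ε ∈ (0,1). Define U = { y₁ + y₂ − y₃ : y₂, y₃ ∈ ℝ^d_+, Σ_i [ y₂ᵢ²/(2σ_{fi}²) + y₃ᵢ²/(2σ_{bi}²) ] ≤ log(1/ε), m_{bi} ≤ y₁ᵢ ≤ m_{fi} ∀i }. Then for any v ∈ ℝ^d, sup_{u∈U} vᵀu = Σ_{i: vᵢ≥0} m_{fi} vᵢ + Σ_{i: vᵢ<0} m_{bi} vᵢ + sqrt( 2 log(1/ε) ( Σ_{i: vᵢ≥0} σ_{fi}² vᵢ² + Σ_{i: vᵢ<0} σ_{bi}² vᵢ² ) ). -/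
/-!
The uncertainty set is the Minkowski sum of the box `[m_b, m_f]` and the deviation set
`{y₂ - y₃ : y₂, y₃ ≥ 0, ∑ᵢ y₂ᵢ²/(2σ_fᵢ²) + y₃ᵢ²/(2σ_bᵢ²) ≤ L}`, `L = log (1/ε)`, so its support
function is the sum of the two support functions. On the box, `vᵢ yᵢ` is maximised at the
endpoint selected by the sign of `vᵢ`. On the deviation set only `y₂ᵢ` (if `vᵢ ≥ 0`) or `y₃ᵢ`
(if `vᵢ < 0`) helps; writing `σᵢ` for the matching `σ_fᵢ` or `σ_bᵢ` and `S = ∑ᵢ σᵢ² vᵢ²`,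
Cauchy–Schwarz against the weights `σᵢ |vᵢ|` bounds the value by `√(2 L S)`, with equality at
`yᵢ = t σᵢ² |vᵢ|`, `t = √(2 L / S)`.
-/

open Finset Real

lemma mul_le_ite_of_mem_Icc {a b y : ℝ} (v : ℝ) (hy : a ≤ y ∧ y ≤ b) :
    v * y ≤ if 0 ≤ v then b * v else a * v := by
  split_ifs <;> nlinarith

lemma mul_sub_le_sqrt_mul_sqrt {σf σb a b : ℝ} (v : ℝ) (hσf : 0 < σf) (hσb : 0 < σb)
    (ha : 0 ≤ a) (hb : 0 ≤ b) :
    v * (a - b) ≤ √((if 0 ≤ v then σf ^ 2 else σb ^ 2) * v ^ 2) *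
      √(2 * (a ^ 2 / (2 * σf ^ 2) + b ^ 2 / (2 * σb ^ 2))) := by
  have hq : 2 * (a ^ 2 / (2 * σf ^ 2) + b ^ 2 / (2 * σb ^ 2)) =
      a ^ 2 / σf ^ 2 + b ^ 2 / σb ^ 2 := by
    field_simp
  rw [hq, ← sqrt_mul (by positivity), mul_add]
  split_ifs with hv
  · have h : σf ^ 2 * v ^ 2 * (a ^ 2 / σf ^ 2) = (v * a) ^ 2 := by field_simp
    calc v * (a - b) ≤ |v * a| := by nlinarith [le_abs_self (v * a)]
      _ ≤ _ := abs_le_sqrt (by rw [h]; exact le_add_of_nonneg_right (by positivity))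
  · have h : σb ^ 2 * v ^ 2 * (b ^ 2 / σb ^ 2) = (v * b) ^ 2 := by field_simp
    calc v * (a - b) ≤ |v * b| := by nlinarith [neg_abs_le (v * b)]
      _ ≤ _ := abs_le_sqrt (by rw [h]; exact le_add_of_nonneg_left (by positivity))

lemma sqrt_div_mul_self (x : ℝ) {S : ℝ} (hS : 0 ≤ S) : √(x / S) * S = √(x * S) := by
  rcases hS.eq_or_lt with rfl | hS
  · simp
  · rw [← sqrt_sq hS.le, ← sqrt_mul' _ (by positivity), sqrt_sq hS.le]
    field_simp

lemma div_mul_le_self {x S : ℝ} (hx : 0 ≤ x) (hS : 0 ≤ S) : x / S * S ≤ x := by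
  rcases hS.eq_or_lt with rfl | hS
  · simpa using hx
  · rw [div_mul_cancel₀ _ hS.ne']

section SupportFunction

variable {ι : Type*} [Fintype ι]

theorem isGreatest_box_support (mb mf v : ι → ℝ) (hm : ∀ i, mb i ≤ mf i) :
    IsGreatest {x | ∃ y : ι → ℝ, (∀ i, mb i ≤ y i ∧ y i ≤ mf i) ∧ x = ∑ i, v i * y i}
      (∑ i, if 0 ≤ v i then mf i * v i else mb i * v i) := by
  refine ⟨⟨fun i => if 0 ≤ v i then mf i else mb i, fun i => ?_, sum_congr rfl fun i _ => ?_⟩, ?_⟩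
  · dsimp only
    split_ifs <;> simp [hm i]
  · dsimp only
    split_ifs <;> ring
  · rintro _ ⟨y, hy, rfl⟩
    exact sum_le_sum fun i _ => mul_le_ite_of_mem_Icc (v i) (hy i)

theorem isGreatest_deviation_support (σf σb v : ι → ℝ) (hσf : ∀ i, 0 < σf i)
    (hσb : ∀ i, 0 < σb i) {L : ℝ} (hL : 0 ≤ L) :
    IsGreatest {x | ∃ y2 y3 : ι → ℝ, (∀ i, 0 ≤ y2 i) ∧ (∀ i, 0 ≤ y3 i) ∧
        ∑ i, (y2 i ^ 2 / (2 * σf i ^ 2) + y3 i ^ 2 / (2 * σb i ^ 2)) ≤ L ∧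
        x = ∑ i, v i * (y2 i - y3 i)}
      √(2 * L * ∑ i, (if 0 ≤ v i then σf i ^ 2 else σb i ^ 2) * v i ^ 2) := by
  set κ : ι → ℝ := fun i => (if 0 ≤ v i then σf i ^ 2 else σb i ^ 2) * v i ^ 2
  have hκ : ∀ i, 0 ≤ κ i := fun i => mul_nonneg (by split_ifs <;> positivity) (sq_nonneg _)
  set S := ∑ i, κ i
  have hS : 0 ≤ S := sum_nonneg fun i _ => hκ i
  constructor
  · -- when `S = 0`, the junk value `2 * L / 0 = 0` gives `t = 0`, which is still optimal
    set t := √(2 * L / S)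
    refine ⟨fun i => if 0 ≤ v i then t * σf i ^ 2 * v i else 0,
      fun i => if 0 ≤ v i then 0 else -(t * σb i ^ 2 * v i), fun i => ?_, fun i => ?_, ?_, ?_⟩
    · dsimp only
      split_ifs with hv
      exacts [mul_nonneg (by positivity) hv, le_rfl]
    · dsimp only
      split_ifs with hv
      exacts [le_rfl, neg_nonneg.2 (mul_nonpos_of_nonneg_of_nonpos (by positivity) (by linarith))]
    · calc _ = t ^ 2 / 2 * S := by
            rw [mul_sum]
            refine sum_congr rfl fun i _ => ?_
            have := (hσf i).ne'
            have := (hσb i).ne'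
            dsimp only [κ]
            split_ifs <;> field_simp <;> ring
        _ = L / S * S := by rw [sq_sqrt (by positivity)]; ring
        _ ≤ L := div_mul_le_self hL hS
    · rw [← sqrt_div_mul_self _ hS, mul_sum]
      refine sum_congr rfl fun i _ => ?_
      dsimp only [κ]
      split_ifs <;> ring
  · rintro _ ⟨y2, y3, h2, h3, hq, rfl⟩
    calc ∑ i, v i * (y2 i - y3 i)
        ≤ ∑ i, √(κ i) * √(2 * (y2 i ^ 2 / (2 * σf i ^ 2) + y3 i ^ 2 / (2 * σb i ^ 2))) :=
          sum_le_sum fun i _ => mul_sub_le_sqrt_mul_sqrt (v i) (hσf i) (hσb i) (h2 i) (h3 i)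
      _ ≤ √S * √(∑ i, 2 * (y2 i ^ 2 / (2 * σf i ^ 2) + y3 i ^ 2 / (2 * σb i ^ 2))) :=
          sum_sqrt_mul_sqrt_le _ hκ fun i => by positivity
      _ ≤ √S * √(2 * L) := by
          rw [← mul_sum]
          gcongr
      _ = √(2 * L * S) := by rw [← sqrt_mul hS, mul_comm]

end SupportFunction

/-- The support function of the forward–backward deviations uncertainty set `U^FB_ε`. -/
theorem stmt8 {d : ℕ} (mf mb σf σb : Fin d → ℝ)
    (hσf : ∀ i, 0 < σf i) (hσb : ∀ i, 0 < σb i) (hm : ∀ i, mb i ≤ mf i)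
    (ε : ℝ) (hε0 : 0 < ε) (hε1 : ε < 1) (v : Fin d → ℝ) :
    sSup {x : ℝ | ∃ y1 y2 y3 : Fin d → ℝ,
        (∀ i, 0 ≤ y2 i) ∧ (∀ i, 0 ≤ y3 i) ∧
        (∑ i, (y2 i ^ 2 / (2 * σf i ^ 2) + y3 i ^ 2 / (2 * σb i ^ 2))) ≤ Real.log (1 / ε) ∧
        (∀ i, mb i ≤ y1 i ∧ y1 i ≤ mf i) ∧
        x = ∑ i, v i * (y1 i + y2 i - y3 i)} =
      (∑ i, if 0 ≤ v i then mf i * v i else mb i * v i) +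
        Real.sqrt (2 * Real.log (1 / ε) *
          ∑ i, (if 0 ≤ v i then σf i ^ 2 else σb i ^ 2) * v i ^ 2) := by
  have hL : 0 ≤ log (1 / ε) := log_nonneg (by rw [le_div_iff₀ hε0]; linarith)
  have hbox := isGreatest_box_support mb mf v hm
  have hdev := isGreatest_deviation_support σf σb v hσf hσb hL
  convert (hbox.isLUB.add hdev.isLUB).csSup_eq (hbox.nonempty.add hdev.nonempty) using 1
  congr 1
  ext x
  simp only [Set.mem_add, Set.mem_ofPred_eq]
  constructor
  · rintro ⟨y1, y2, y3, h2, h3, hq, h1, rfl⟩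
    refine ⟨_, ⟨y1, h1, rfl⟩, _, ⟨y2, y3, h2, h3, hq, rfl⟩, ?_⟩
    rw [← sum_add_distrib]
    exact sum_congr rfl fun i _ => by ring
  · rintro ⟨_, ⟨y1, h1, rfl⟩, _, ⟨y2, y3, h2, h3, hq, rfl⟩, rfl⟩
    refine ⟨y1, y2, y3, h2, h3, hq, h1, ?_⟩
    rw [← sum_add_distrib]
    exact sum_congr rfl fun i _ => by ring
end

section
/- Fix points û^{(1)} ≤ … ≤ û^{(N)} in ℝ (with û^{(0)} ≤ û^{(1)} and û^{(N)} ≤ û^{(N+1)}), Γ ∈ (0,1), and a non-decreasing function g : [û^{(0)}, û^{(N+1)}] → ℝ. Let P_KS be the set of Borel probability measures Q on [û^{(0)}, û^{(N+1)}] such that Q(ũ ≤ û^{(j)}) ≥ j/N − Γ and Q(ũ < û^{(j)}) ≤ (j−1)/N + Γ for all j = 1,…,N. Then sup_{Q ∈ P_KS} E^Q[g(ũ)] = Σ_{j=0}^{N+1} q_j^R(Γ) g(û^{(j)}), where q^R(Γ) is the discrete distribution with q_j^R(Γ) = q_{N+1−j}^L(Γ) and q^L(Γ) has q_0^L = Γ,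 q_j^L = 1/N for 1 ≤ j ≤ ⌊N(1−Γ)⌋, q_{⌊N(1−Γ)⌋+1}^L = 1 − Γ − ⌊N(1−Γ)⌋/N, and q_j^L = 0 otherwise. -/
open MeasureTheory

/-- The discrete distribution `q^L(Γ)` on the indices `0, …, N+1`. -/
noncomputable def qL (N : ℕ) (Γ : ℝ) (j : ℕ) : ℝ :=
  if j = 0 then Γ
  else if j ≤ ⌊(N : ℝ) * (1 - Γ)⌋₊ then 1 / N
  else if j = ⌊(N : ℝ) * (1 - Γ)⌋₊ + 1 then 1 - Γ - (⌊(N : ℝ) * (1 - Γ)⌋₊ : ℝ) / N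
  else 0

/-- The discrete distribution `q^R(Γ)`, given by `q_j^R(Γ) = q_{N+1−j}^L(Γ)`. -/
noncomputable def qR (N : ℕ) (Γ : ℝ) (j : ℕ) : ℝ := qL N Γ (N + 1 - j)

/-! For `y ∈ [û₀, û_{N+1}]`, monotonicity of `g` gives the staircase bound
`g y ≤ g û₀ + ∑ₖ (g û_{k+1} - g ûₖ) · 1{y > ûₖ}`, so
`E^Q g ≤ g û₀ + ∑ₖ (g û_{k+1} - g ûₖ) Q(ũ > ûₖ)`.
The lower Kolmogorov–Smirnov constraint gives `Q(ũ > ûₖ) ≤ 1 - max (k/N - Γ) 0`, and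
`max (k/N - Γ) 0` is exactly the cumulative mass of `q^R(Γ)` up to `k`, so by Abel summation the
bound is `∑ⱼ q^R_j g ûⱼ`. The same cumulative masses show that `q^R(Γ)`, placed on the points `ûⱼ`,
lies in the region, so the bound is attained. -/

open Finset

section KolmogorovSmirnovWeights

variable {N : ℕ} {Γ : ℝ}

-- `q^L(Γ)` lists the decrements of `x ↦ max (1 - Γ - x / N) 0`, whose kink `x = N (1 - Γ)`
-- is where the floor in the definition comes from.
lemma qL_eq_max_sub_max (hN : 0 < N) (hΓ : Γ ≤ 1) {k : ℕ} (hk : k ≠ 0) :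
    qL N Γ k = max (1 - Γ - (k - 1) / N) 0 - max (1 - Γ - k / N) 0 := by
  have hN' : (0 : ℝ) < N := Nat.cast_pos.2 hN
  have hc : 0 ≤ (N : ℝ) * (1 - Γ) := by positivity
  have hK := Nat.floor_le hc
  have hK' := Nat.lt_floor_add_one ((N : ℝ) * (1 - Γ))
  have hdiv : ∀ x : ℝ, 1 - Γ - x / N = (N * (1 - Γ) - x) / N := fun x => by field_simp
  have hpos : ∀ x : ℝ, x ≤ N * (1 - Γ) → max ((N * (1 - Γ) - x) / N) 0 = (N * (1 - Γ) - x) / N :=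
    fun x hx => max_eq_left (div_nonneg (by linarith) hN'.le)
  have hneg : ∀ x : ℝ, N * (1 - Γ) ≤ x → max ((N * (1 - Γ) - x) / N) 0 = 0 :=
    fun x hx => max_eq_right (div_nonpos_of_nonpos_of_nonneg (by linarith) hN'.le)
  simp only [hdiv]
  rw [qL, if_neg hk]
  split_ifs with hle heq
  · have hk' : (k : ℝ) ≤ ⌊(N : ℝ) * (1 - Γ)⌋₊ := by exact_mod_cast hle
    rw [hpos _ (by linarith), hpos _ (by linarith)]
    field_simp
    ring
  · subst heq
    push_cast
    rw [hpos _ (by linarith), hneg _ hK'.le]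
    field_simp
    ring
  · have hk' : (⌊(N : ℝ) * (1 - Γ)⌋₊ : ℝ) + 2 ≤ k := by exact_mod_cast (by omega : _ + 2 ≤ k)
    rw [hneg _ (by linarith), hneg _ (by linarith)]
    ring

lemma qR_eq_max_sub_max (hN : 0 < N) (hΓ : Γ ≤ 1) {j : ℕ} (hj : j ≤ N) :
    qR N Γ j = max (j / N - Γ) 0 - max ((j - 1) / N - Γ) 0 := by
  have hN' : (N : ℝ) ≠ 0 := by positivity
  rw [qR, qL_eq_max_sub_max hN hΓ (by omega), Nat.cast_sub (by omega)]
  push_cast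
  congr 2 <;> field_simp <;> ring

lemma sum_range_qR (hN : 0 < N) (hΓ0 : 0 ≤ Γ) (hΓ1 : Γ ≤ 1) {j : ℕ} (hj : j ≤ N) :
    ∑ i ∈ range (j + 1), qR N Γ i = max (j / N - Γ) 0 := by
  have hN' : (0 : ℝ) < N := Nat.cast_pos.2 hN
  have htele := sum_range_sub (fun i : ℕ => max (((i : ℝ) - 1) / N - Γ) 0) (j + 1)
  rw [sum_congr rfl fun i hi => qR_eq_max_sub_max hN hΓ1 (by have := mem_range.1 hi; omega)]
  push_cast at htele
  simp only [add_sub_cancel_right] at htele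
  have hneg : ((0 : ℝ) - 1) / N - Γ ≤ 0 := by
    rw [zero_sub, neg_div]
    linarith [one_div_nonneg.2 hN'.le]
  rw [htele, max_eq_right hneg, sub_zero]

lemma sum_range_qR_eq_one (hN : 0 < N) (hΓ0 : 0 ≤ Γ) (hΓ1 : Γ ≤ 1) :
    ∑ i ∈ range (N + 2), qR N Γ i = 1 := by
  have hN' : (N : ℝ) ≠ 0 := by positivity
  rw [sum_range_succ, sum_range_qR hN hΓ0 hΓ1 le_rfl, div_self hN',
    max_eq_left (by linarith)]
  simp [qR, qL]

lemma qR_nonneg (hN : 0 < N) (hΓ0 : 0 ≤ Γ) (hΓ1 : Γ ≤ 1) (j : ℕ) : 0 ≤ qR N Γ j := by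
  rcases le_or_gt j N with hj | hj
  · rw [qR_eq_max_sub_max hN hΓ1 hj, sub_nonneg]
    gcongr
    linarith
  · simpa [qR, qL, Nat.sub_eq_zero_of_le hj] using hΓ0

end KolmogorovSmirnovWeights

lemma sum_mul_eq_add_sum_sub_mul_one_sub_sum {p a : ℕ → ℝ} {n : ℕ}
    (hp : ∑ i ∈ range (n + 1), p i = 1) :
    ∑ i ∈ range (n + 1), p i * a i =
      a 0 + ∑ k ∈ range n, (a (k + 1) - a k) * (1 - ∑ i ∈ range (k + 1), p i) := by
  have hparts := sum_range_by_parts a p (n + 1)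
  simp only [smul_eq_mul, Nat.add_sub_cancel, hp, mul_one] at hparts
  simp only [mul_sub, mul_one, sum_sub_distrib, sum_range_sub (fun k => a k)]
  simp only [mul_comm (p _)] at hparts ⊢
  linarith

lemma le_add_sum_mul_indicator_Ioi {u : ℕ → ℝ} {f : ℝ → ℝ} {n : ℕ}
    (hu : MonotoneOn u (Set.Iic n)) (hf : MonotoneOn f (Set.Icc (u 0) (u n)))
    {y : ℝ} (hy : y ∈ Set.Icc (u 0) (u n)) :
    f y ≤ f (u 0) + ∑ k ∈ range n, (f (u (k + 1)) - f (u k)) * (Set.Ioi (u k)).indicator 1 y := by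
  induction n with
  | zero => simpa using hf hy ⟨le_rfl, le_rfl⟩ hy.2
  | succ n ih =>
    have hmem : ∀ {k}, k ≤ n + 1 → k ∈ Set.Iic (n + 1) := Set.mem_Iic.2
    have hun : u n ≤ u (n + 1) := hu (hmem n.le_succ) (hmem le_rfl) n.le_succ
    have h0n : u 0 ≤ u n := hu (hmem (Nat.zero_le _)) (hmem n.le_succ) (Nat.zero_le _)
    by_cases hyn : y ≤ u n
    · have hle := ih (hu.mono (Set.Iic_subset_Iic.2 n.le_succ))
        (hf.mono (Set.Icc_subset_Icc_right hun)) ⟨hy.1, hyn⟩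
      have hlast : 0 ≤ (f (u (n + 1)) - f (u n)) * (Set.Ioi (u n)).indicator 1 y :=
        mul_nonneg (sub_nonneg.2 (hf ⟨h0n, hun⟩ ⟨h0n.trans hun, le_rfl⟩ hun))
          (Set.indicator_nonneg (fun _ _ => zero_le_one) y)
      rw [sum_range_succ]
      linarith
    · have hind : ∀ k ∈ range (n + 1), (Set.Ioi (u k)).indicator (1 : ℝ → ℝ) y = 1 :=
        fun k hk => Set.indicator_of_mem
          ((hu (hmem (by have := mem_range.1 hk; omega)) (hmem n.le_succ)
            (Nat.le_of_lt_succ (mem_range.1 hk))).trans_lt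
            (not_le.1 hyn)) _
      rw [sum_congr rfl fun k hk => by rw [hind k hk, mul_one], sum_range_sub (fun k => f (u k))]
      simpa using hf hy ⟨h0n.trans hun, le_rfl⟩ hy.2

lemma integrable_of_monotoneOn_of_ae_mem_Icc {μ : Measure ℝ} [IsFiniteMeasure μ] {f : ℝ → ℝ}
    {a b : ℝ} (hf : MonotoneOn f (Set.Icc a b)) (hμ : ∀ᵐ y ∂μ, y ∈ Set.Icc a b) :
    Integrable f μ := by
  have h := hf.integrableOn_isCompact (μ := μ) isCompact_Icc
  rwa [IntegrableOn, Measure.restrict_eq_self_of_ae_mem hμ] at h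

lemma integral_le_add_sum_mul_measureReal_Ioi {μ : Measure ℝ} [IsProbabilityMeasure μ]
    {u : ℕ → ℝ} {f : ℝ → ℝ} {n : ℕ}
    (hu : MonotoneOn u (Set.Iic n)) (hf : MonotoneOn f (Set.Icc (u 0) (u n)))
    (hμ : ∀ᵐ y ∂μ, y ∈ Set.Icc (u 0) (u n)) :
    ∫ y, f y ∂μ ≤ f (u 0) + ∑ k ∈ range n, (f (u (k + 1)) - f (u k)) * μ.real (Set.Ioi (u k)) := by
  have hind : ∀ k, Integrable (fun y => (f (u (k + 1)) - f (u k)) *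
      (Set.Ioi (u k)).indicator (1 : ℝ → ℝ) y) μ :=
    fun k => ((integrable_const 1).indicator measurableSet_Ioi).const_mul _
  calc ∫ y, f y ∂μ
      ≤ ∫ y, f (u 0) +
          ∑ k ∈ range n, (f (u (k + 1)) - f (u k)) * (Set.Ioi (u k)).indicator 1 y ∂μ :=
        integral_mono_ae (integrable_of_monotoneOn_of_ae_mem_Icc hf hμ)
          ((integrable_const _).add (integrable_finsetSum _ fun k _ => hind k))
          (hμ.mono fun y hy => le_add_sum_mul_indicator_Ioi hu hf hy)
    _ = _ := by
        rw [integral_add (integrable_const _) (integrable_finsetSum _ fun k _ => hind k),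
          integral_finsetSum _ fun k _ => hind k]
        simp [integral_const_mul, integral_indicator_one measurableSet_Ioi]

lemma ae_mem_Icc_of_measure_Iio_eq_zero {μ : Measure ℝ} {a b : ℝ} (ha : μ (Set.Iio a) = 0)
    (hb : μ (Set.Ioi b) = 0) : ∀ᵐ y ∂μ, y ∈ Set.Icc a b := by
  filter_upwards [measure_eq_zero_iff_ae_notMem.1 ha, measure_eq_zero_iff_ae_notMem.1 hb]
    with y hya hyb
  exact ⟨not_lt.1 hya, not_lt.1 hyb⟩

section AtomicMeasure

variable {α : Type*} [MeasurableSpace α]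

noncomputable def atomicMeasure (n : ℕ) (p : ℕ → ℝ) (u : ℕ → α) : Measure α :=
  ∑ j ∈ range n, ENNReal.ofReal (p j) • Measure.dirac (u j)

variable [MeasurableSingletonClass α] {n : ℕ} {p : ℕ → ℝ} {u : ℕ → α}

open Classical in
lemma atomicMeasure_apply (s : Set α) :
    atomicMeasure n p u s = ∑ j ∈ range n with u j ∈ s, ENNReal.ofReal (p j) := by
  simp [atomicMeasure, sum_filter, Set.indicator_apply]

lemma atomicMeasure_eq_zero {s : Set α} (hs : ∀ j < n, u j ∉ s) : atomicMeasure n p u s = 0 := by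
  classical
  rw [atomicMeasure_apply]
  refine sum_eq_zero fun j hj => ?_
  rw [mem_filter, mem_range] at hj
  exact absurd hj.2 (hs j hj.1)

lemma isProbabilityMeasure_atomicMeasure (hp : ∀ j, 0 ≤ p j) (h1 : ∑ j ∈ range n, p j = 1) :
    IsProbabilityMeasure (atomicMeasure n p u) := by
  constructor
  classical
  simp only [atomicMeasure_apply, Set.mem_univ, filter_true]
  rw [← ENNReal.ofReal_sum_of_nonneg fun j _ => hp j, h1, ENNReal.ofReal_one]

lemma integral_atomicMeasure (hp : ∀ j, 0 ≤ p j) (f : α → ℝ) :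
    ∫ x, f x ∂atomicMeasure n p u = ∑ j ∈ range n, p j * f (u j) := by
  rw [atomicMeasure, integral_finsetSum_measure fun j _ =>
    (integrable_dirac (by simp)).smul_measure ENNReal.ofReal_ne_top]
  simp [integral_smul_measure, ENNReal.toReal_ofReal (hp _)]

end AtomicMeasure

section KolmogorovSmirnovRegion

variable {N : ℕ} {Γ : ℝ} {u : ℕ → ℝ}

lemma ofReal_le_atomicMeasure_qR_Iic (hN : 0 < N) (hΓ0 : 0 ≤ Γ) (hΓ1 : Γ ≤ 1)
    (hu : MonotoneOn u (Set.Iic (N + 1))) {j : ℕ} (hj : j ≤ N) :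
    ENNReal.ofReal (j / N - Γ) ≤ atomicMeasure (N + 2) (qR N Γ) u (Set.Iic (u j)) := by
  classical
  calc ENNReal.ofReal (j / N - Γ)
      ≤ ENNReal.ofReal (∑ i ∈ range (j + 1), qR N Γ i) := by
        rw [sum_range_qR hN hΓ0 hΓ1 hj]
        exact ENNReal.ofReal_le_ofReal (le_max_left _ _)
    _ = ∑ i ∈ range (j + 1), ENNReal.ofReal (qR N Γ i) :=
        ENNReal.ofReal_sum_of_nonneg fun i _ => qR_nonneg hN hΓ0 hΓ1 i
    _ ≤ _ := by
        rw [atomicMeasure_apply]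
        refine sum_le_sum_of_subset fun i hi => ?_
        rw [mem_range] at hi
        rw [mem_filter, mem_range, Set.mem_Iic]
        exact ⟨by omega, hu (Set.mem_Iic.2 (by omega)) (Set.mem_Iic.2 (by omega)) (by omega)⟩

lemma atomicMeasure_qR_Iio_le_ofReal (hN : 0 < N) (hΓ0 : 0 ≤ Γ) (hΓ1 : Γ ≤ 1)
    (hu : MonotoneOn u (Set.Iic (N + 1))) {j : ℕ} (hj1 : 1 ≤ j) (hjN : j ≤ N) :
    atomicMeasure (N + 2) (qR N Γ) u (Set.Iio (u j)) ≤ ENNReal.ofReal ((j - 1) / N + Γ) := by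
  classical
  obtain ⟨i, rfl⟩ := Nat.exists_eq_add_of_le' hj1
  calc atomicMeasure (N + 2) (qR N Γ) u (Set.Iio (u (i + 1)))
      ≤ ∑ k ∈ range (i + 1), ENNReal.ofReal (qR N Γ k) := by
        rw [atomicMeasure_apply]
        refine sum_le_sum_of_subset fun k hk => ?_
        rw [mem_filter, mem_range, Set.mem_Iio] at hk
        rw [mem_range]
        by_contra! hik
        exact hk.2.not_ge (hu (Set.mem_Iic.2 (by omega)) (Set.mem_Iic.2 (by omega)) hik)
    _ = ENNReal.ofReal (max (i / N - Γ) 0) := by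
        rw [← sum_range_qR hN hΓ0 hΓ1 (by omega),
          ENNReal.ofReal_sum_of_nonneg fun k _ => qR_nonneg hN hΓ0 hΓ1 k]
    _ ≤ _ := by
        have hi : 0 ≤ (i : ℝ) / N := by positivity
        push_cast
        rw [add_sub_cancel_right]
        exact ENNReal.ofReal_le_ofReal (max_le (by linarith) (by linarith))

lemma integral_le_sum_qR_mul (hN : 0 < N) (hΓ0 : 0 ≤ Γ) (hΓ1 : Γ ≤ 1)
    (hu : MonotoneOn u (Set.Iic (N + 1))) {g : ℝ → ℝ}
    (hg : MonotoneOn g (Set.Icc (u 0) (u (N + 1)))) {Q : Measure ℝ} [IsProbabilityMeasure Q]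
    (hQ : ∀ᵐ y ∂Q, y ∈ Set.Icc (u 0) (u (N + 1)))
    (hks : ∀ j : ℕ, 1 ≤ j → j ≤ N → ENNReal.ofReal (j / N - Γ) ≤ Q (Set.Iic (u j))) :
    ∫ y, g y ∂Q ≤ ∑ j ∈ range (N + 2), qR N Γ j * g (u j) := by
  rw [sum_mul_eq_add_sum_sub_mul_one_sub_sum (sum_range_qR_eq_one hN hΓ0 hΓ1)]
  refine (integral_le_add_sum_mul_measureReal_Ioi hu hg hQ).trans ?_
  gcongr with k hk
  · rw [mem_range] at hk
    have hmem : ∀ {i}, i ≤ N + 1 → u i ∈ Set.Icc (u 0) (u (N + 1)) := fun hi =>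
      ⟨hu (Set.mem_Iic.2 (Nat.zero_le _)) (Set.mem_Iic.2 hi) (Nat.zero_le _),
        hu (Set.mem_Iic.2 hi) (Set.mem_Iic.2 le_rfl) hi⟩
    exact sub_nonneg.2 (hg (hmem (by omega)) (hmem (by omega))
      (hu (Set.mem_Iic.2 (by omega)) (Set.mem_Iic.2 (by omega)) k.le_succ))
  · rw [mem_range] at hk
    rw [sum_range_qR hN hΓ0 hΓ1 (by omega), ← Set.compl_Iic,
      probReal_compl_eq_one_sub measurableSet_Iic, sub_le_sub_iff_left]
    refine max_le ?_ measureReal_nonneg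
    rcases Nat.eq_zero_or_pos k with rfl | hk0
    · rw [Nat.cast_zero, zero_div, zero_sub]
      exact (neg_nonpos.2 hΓ0).trans measureReal_nonneg
    · exact (ENNReal.ofReal_le_iff_le_toReal (measure_ne_top _ _)).1 (hks k hk0 (by omega))

end KolmogorovSmirnovRegion

/-- Worst-case expectation of a non-decreasing function over the Kolmogorov–Smirnov
confidence region: the supremum is attained by the discrete distribution `q^R(Γ)`
supported on the (ordered) data points. -/
theorem stmt15 (N : ℕ) (hN : 0 < N) (uhat : ℕ → ℝ)
    (hmono : ∀ j, j ≤ N → uhat j ≤ uhat (j + 1))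
    (Γ : ℝ) (hΓ0 : 0 < Γ) (hΓ1 : Γ < 1)
    (g : ℝ → ℝ) (hg : MonotoneOn g (Set.Icc (uhat 0) (uhat (N + 1)))) :
    sSup {x : ℝ | ∃ Q : Measure ℝ, IsProbabilityMeasure Q ∧
        Q {y | y < uhat 0} = 0 ∧ Q {y | uhat (N + 1) < y} = 0 ∧
        (∀ j : ℕ, 1 ≤ j → j ≤ N →
          ENNReal.ofReal ((j : ℝ) / N - Γ) ≤ Q {y | y ≤ uhat j} ∧
          Q {y | y < uhat j} ≤ ENNReal.ofReal (((j : ℝ) - 1) / N + Γ)) ∧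
        x = ∫ y, g y ∂Q} =
      ∑ j ∈ Finset.range (N + 2), qR N Γ j * g (uhat j) := by
  have hu : MonotoneOn uhat (Set.Iic (N + 1)) :=
    monotoneOn_of_le_add_one Set.ordConnected_Iic fun k _ _ hk =>
      hmono k (Nat.le_of_succ_le_succ hk)
  have hq := qR_nonneg hN hΓ0.le hΓ1.le
  have hmem : ∀ {j}, j ≤ N + 1 → j ∈ Set.Iic (N + 1) := Set.mem_Iic.2
  refine IsGreatest.csSup_eq ⟨⟨atomicMeasure (N + 2) (qR N Γ) uhat,
    isProbabilityMeasure_atomicMeasure hq (sum_range_qR_eq_one hN hΓ0.le hΓ1.le),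
    atomicMeasure_eq_zero fun j hj => not_lt.2 (hu (hmem (Nat.zero_le _)) (hmem (by omega))
      (Nat.zero_le _)),
    atomicMeasure_eq_zero fun j hj => not_lt.2 (hu (hmem (by omega)) (hmem le_rfl) (by omega)),
    fun j hj1 hjN => ⟨ofReal_le_atomicMeasure_qR_Iic hN hΓ0.le hΓ1.le hu hjN,
      atomicMeasure_qR_Iio_le_ofReal hN hΓ0.le hΓ1.le hu hj1 hjN⟩,
    (integral_atomicMeasure hq g).symm⟩, ?_⟩
  rintro x ⟨Q, hQ, hlow, hhigh, hks, rfl⟩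
  exact integral_le_sum_qR_mul hN hΓ0.le hΓ1.le hu hg
    (ae_mem_Icc_of_measure_Iio_eq_zero hlow hhigh) fun j hj1 hjN => (hks j hj1 hjN).1
end

section
/- Suppose for each j = 1,…,m, the event A_j (over the random sample S) 'U_j(S) implies a probabilistic guarantee at level ε_j for P*' holds whenever the single event A = 'the family {U(S,ε): 0<ε<1} simultaneously implies a probabilistic guarantee' holds, and P(A) ≥ 1−α. If Σ_j ε_j ≤ ε̄ and x satisfies f_j(u,x) ≤ 0 for all u ∈ U_j(S) and each j, then with probability at least 1−α over the sample, P*( max_j f_j(ũ,x) ≤ 0 ) ≥ 1 − ε̄. -/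
open MeasureTheory

/-- A set `U` implies a probabilistic guarantee at level `ε` for `P`: for every
concave (continuous) `f`, robust feasibility over `U` implies `P(f(ũ) ≤ 0) ≥ 1−ε`. -/
def ImpliesGuarantee {d : ℕ} (P : Measure (Fin d → ℝ)) (U : Set (Fin d → ℝ)) (ε : ℝ) : Prop :=
  ∀ g : (Fin d → ℝ) → ℝ, ConcaveOn ℝ Set.univ g → Continuous g →
    (∀ u ∈ U, g u ≤ 0) → ENNReal.ofReal (1 - ε) ≤ P {u | g u ≤ 0}

namespace MeasureTheory

variable {α ι : Type*} [MeasurableSpace α] {μ : Measure α} [IsProbabilityMeasure μ] {s : Set α}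

theorem ofReal_one_sub_le_prob_iff_measureReal_compl_le (hs : MeasurableSet s) (ε : ℝ) :
    ENNReal.ofReal (1 - ε) ≤ μ s ↔ μ.real sᶜ ≤ ε := by
  rw [ENNReal.ofReal_le_iff_le_toReal (measure_ne_top μ s), ← measureReal_def,
    probReal_compl_eq_one_sub hs]
  constructor <;> intro h <;> linarith

/-- Working with `μ.real` rather than in `ℝ≥0∞` avoids truncated subtraction, so the union
bound needs no sign condition on the `ε i`. -/
theorem ofReal_one_sub_le_prob_iInter [Fintype ι] {s : ι → Set α} (hs : ∀ i, MeasurableSet (s i))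
    {ε : ι → ℝ} {δ : ℝ} (hε : ∀ i, ENNReal.ofReal (1 - ε i) ≤ μ (s i)) (hδ : ∑ i, ε i ≤ δ) :
    ENNReal.ofReal (1 - δ) ≤ μ (⋂ i, s i) := by
  rw [ofReal_one_sub_le_prob_iff_measureReal_compl_le (MeasurableSet.iInter hs), Set.compl_iInter]
  calc μ.real (⋃ i, (s i)ᶜ) ≤ ∑ i, μ.real (s i)ᶜ := measureReal_iUnion_fintype_le _
    _ ≤ ∑ i, ε i := Finset.sum_le_sum fun i _ ↦
        (ofReal_one_sub_le_prob_iff_measureReal_compl_le (hs i) (ε i)).mp (hε i)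
    _ ≤ δ := hδ

end MeasureTheory

theorem stmt19_general {d m : ℕ} {Ω : Type*} [MeasurableSpace Ω]
    (Q : Measure Ω)
    (P : Measure (Fin d → ℝ)) [IsProbabilityMeasure P]
    (A : Set Ω) (α : ℝ) (hA : ENNReal.ofReal (1 - α) ≤ Q A)
    (U : Fin m → Ω → Set (Fin d → ℝ)) (ε : Fin m → ℝ) (εbar : ℝ)
    (hsum : ∑ j, ε j ≤ εbar)
    (himp : ∀ ω ∈ A, ∀ j, ImpliesGuarantee P (U j ω) (ε j))
    (f : Fin m → (Fin d → ℝ) → ℝ)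
    (hconc : ∀ j, ConcaveOn ℝ Set.univ (f j)) (hcont : ∀ j, Continuous (f j))
    (hfeas : ∀ ω, ∀ j, ∀ u ∈ U j ω, f j u ≤ 0) :
    ENNReal.ofReal (1 - α) ≤
      Q {ω | ENNReal.ofReal (1 - εbar) ≤ P {u | ∀ j, f j u ≤ 0}} := by
  refine hA.trans (measure_mono fun ω hω ↦ ?_)
  rw [Set.mem_ofPred_eq, Set.ofPred_forall]
  exact ofReal_one_sub_le_prob_iInter
    (fun j ↦ (isClosed_le (hcont j) continuous_const).measurableSet)
    (fun j ↦ himp ω hω j (f j) (hconc j) (hcont j) (hfeas ω j)) hsum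

/-- Simultaneous guarantees plus a union bound: if on an event `A` of sampling-probability
at least `1−α` each data-driven set `U_j(S)` implies a probabilistic guarantee at level
`ε_j` with `Σ_j ε_j ≤ ε̄`, and `x` is robust feasible for every constraint, then with
probability at least `1−α` over the sample, all uncertain constraints hold simultaneously
with `P*`-probability at least `1−ε̄`. -/
theorem stmt19 {d m : ℕ} {Ω : Type*} [MeasurableSpace Ω]
    (Q : Measure Ω) [IsProbabilityMeasure Q]
    (P : Measure (Fin d → ℝ)) [IsProbabilityMeasure P]
    (A : Set Ω) (α : ℝ) (hA : ENNReal.ofReal (1 - α) ≤ Q A)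
    (U : Fin m → Ω → Set (Fin d → ℝ)) (ε : Fin m → ℝ) (εbar : ℝ)
    (hε : ∀ j, 0 < ε j) (hsum : ∑ j, ε j ≤ εbar)
    (himp : ∀ ω ∈ A, ∀ j, ImpliesGuarantee P (U j ω) (ε j))
    (f : Fin m → (Fin d → ℝ) → ℝ)
    (hconc : ∀ j, ConcaveOn ℝ Set.univ (f j)) (hcont : ∀ j, Continuous (f j))
    (hfeas : ∀ ω, ∀ j, ∀ u ∈ U j ω, f j u ≤ 0) :
    ENNReal.ofReal (1 - α) ≤
      Q {ω | ENNReal.ofReal (1 - εbar) ≤ P {u | ∀ j, f j u ≤ 0}} :=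
  stmt19_general Q P A α hA U ε εbar hsum himp f hconc hcont hfeas
end
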